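/- arXiv:1511.04271 — 2 statements merged into one kernel-verified Lean document; each statement's English description precedes it below -/
import Mathlib

section
/- Under the standing hypotheses on g, for every open element o of C it holds that g(o) = g(⊤) ⊓ □_g(o). (Proposition 4.9(2).) -/
/-- An element is completely join-prime. -/
def CJPrime {C : Type*} [CompleteLattice C] (j : C) : Prop :=
  j ≠ ⊥ ∧ ∀ S : Set C, j ≤ sSup S → ∃ s ∈ S, j ≤ s

/-- An element is completely meet-prime. -/
def CMPrime {C : Type*} [CompleteLattice C] (m : C) : Prop :=
  m ≠ ⊤ ∧ ∀ S : Set C, sInf S ≤ m → ∃ s ∈ S, s ≤ m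

/-- ◇_f(u) = ⋁ { f j | j completely join-prime, j ≤ u }. -/
def diam {C D : Type*} [CompleteLattice C] [CompleteLattice D]
    (f : C → D) (u : C) : D :=
  sSup (f '' {j | CJPrime j ∧ j ≤ u})

/-- ■_f(v) = ⋁ { j | j completely join-prime, f j ≤ v }. -/
def bsq {C D : Type*} [CompleteLattice C] [CompleteLattice D]
    (f : C → D) (v : D) : C :=
  sSup {j | CJPrime j ∧ f j ≤ v}

/-- □_g(u) = ⋀ { g m | m completely meet-prime, u ≤ m }. -/
def boxg {C D : Type*} [CompleteLattice C] [CompleteLattice D]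
    (g : C → D) (u : C) : D :=
  sInf (g '' {m | CMPrime m ∧ u ≤ m})

/-- ◆_g(v) = ⋀ { m | m completely meet-prime, v ≤ g m }. -/
def bdiam {C D : Type*} [CompleteLattice C] [CompleteLattice D]
    (g : C → D) (v : D) : C :=
  sInf {m | CMPrime m ∧ v ≤ g m}

/-- Every element is the sup of the completely join-primes below it. -/
def JoinPerfect (C : Type*) [CompleteLattice C] : Prop :=
  ∀ u : C, u = sSup {j | CJPrime j ∧ j ≤ u}

/-- Every element is the inf of the completely meet-primes above it. -/
def MeetPerfect (C : Type*) [CompleteLattice C] : Prop :=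
  ∀ u : C, u = sInf {m | CMPrime m ∧ u ≤ m}

/-- `(C, e)` is a canonical extension of the bounded distributive lattice `A`. -/
structure IsCanonicalExtension {A C : Type*} [DistribLattice A] [BoundedOrder A]
    [CompleteLattice C] (e : A → C) : Prop where
  injective : Function.Injective e
  map_bot : e ⊥ = ⊥
  map_top : e ⊤ = ⊤
  map_inf : ∀ a b : A, e (a ⊓ b) = e a ⊓ e b
  map_sup : ∀ a b : A, e (a ⊔ b) = e a ⊔ e b
  dense_joinOfMeets : ∀ u : C, ∃ 𝒮 : Set (Set A),
      u = sSup ((fun S => sInf (e '' S)) '' 𝒮)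
  dense_meetOfJoins : ∀ u : C, ∃ 𝒮 : Set (Set A),
      u = sInf ((fun S => sSup (e '' S)) '' 𝒮)
  compact : ∀ S T : Set A, sInf (e '' S) ≤ sSup (e '' T) →
      ∃ F : Finset A, ↑F ⊆ S ∧ ∃ G : Finset A, ↑G ⊆ T ∧ F.inf id ≤ G.sup id

/-- Closed elements of the canonical extension: meets of subsets of `e(A)`. -/
def ClosedElem {A C : Type*} [CompleteLattice C] (e : A → C) (x : C) : Prop :=
  ∃ S : Set A, x = sInf (e '' S)

/-- Open elements of the canonical extension: joins of subsets of `e(A)`. -/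
def OpenElem {A C : Type*} [CompleteLattice C] (e : A → C) (x : C) : Prop :=
  ∃ S : Set A, x = sSup (e '' S)

/-- Nonempty downward-directed family. -/
def DownDir {C : Type*} [Preorder C] (𝒞 : Set C) : Prop :=
  𝒞.Nonempty ∧ ∀ x ∈ 𝒞, ∀ y ∈ 𝒞, ∃ z ∈ 𝒞, z ≤ x ∧ z ≤ y

/-- Nonempty upward-directed family. -/
def UpDir {C : Type*} [Preorder C] (𝒪 : Set C) : Prop :=
  𝒪.Nonempty ∧ ∀ x ∈ 𝒪, ∀ y ∈ 𝒪, ∃ z ∈ 𝒪, x ≤ z ∧ y ≤ z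

/-- `h` preserves down-directed meets of closed elements. -/
def ClosedEsakia {A C D : Type*} [CompleteLattice C] [CompleteLattice D]
    (e : A → C) (h : C → D) : Prop :=
  ∀ 𝒞 : Set C, DownDir 𝒞 → (∀ c ∈ 𝒞, ClosedElem e c) →
    h (sInf 𝒞) = sInf (h '' 𝒞)

/-- `h` preserves up-directed joins of open elements. -/
def OpenEsakia {A C D : Type*} [CompleteLattice C] [CompleteLattice D]
    (e : A → C) (h : C → D) : Prop :=
  ∀ 𝒪 : Set C, UpDir 𝒪 → (∀ o ∈ 𝒪, OpenElem e o) →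
    h (sSup 𝒪) = sSup (h '' 𝒪)

/-! The inequality `g o ≤ g ⊤ ⊓ □_g o` is monotonicity. For the converse, test against a
completely meet-prime `n ≥ g o` with `g ⊤ ≰ n`. By multiplicativity and primality of `n`, the
elements `a` with `g (e a) ≰ n` form a filter `T`, and by compactness `⋀ e[T] ≰ o`. Meet-perfectness
of `C` yields a completely meet-prime `m ≥ o` with `⋀ e[T] ≰ m`. Such an `m` is open, so it is the
up-directed join of the `e a ≤ m`, none of which lies in `e[T]`; open Esakia then gives `g m ≤ n`,
whence `□_g o ≤ g m ≤ n`. -/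

theorem CMPrime.le_or_le_of_inf_le {C : Type*} [CompleteLattice C] {n a b : C} (hn : CMPrime n)
    (h : a ⊓ b ≤ n) : a ≤ n ∨ b ≤ n := by
  obtain ⟨x, hx, hxn⟩ := hn.2 {a, b} (by rwa [sInf_pair])
  rcases hx with rfl | rfl
  exacts [Or.inl hxn, Or.inr hxn]

theorem MeetPerfect.exists_cmPrime_ge_not_le {C : Type*} [CompleteLattice C] (hC : MeetPerfect C)
    {x u : C} (h : ¬ x ≤ u) : ∃ m, CMPrime m ∧ u ≤ m ∧ ¬ x ≤ m := by
  by_contra! hall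
  refine h ((le_sInf ?_).trans (hC u).ge)
  rintro m ⟨hm, hum⟩
  exact hall m hm hum

theorem OpenElem.sSup_image_setOf_le {A C : Type*} [CompleteLattice C] {e : A → C} {u : C}
    (hu : OpenElem e u) : sSup (e '' {a | e a ≤ u}) = u := by
  obtain ⟨S, rfl⟩ := hu
  refine le_antisymm (sSup_le ?_) (sSup_le_sSup (Set.image_mono fun a ha => le_sSup ?_))
  · rintro _ ⟨a, ha, rfl⟩
    exact ha
  · exact ⟨a, ha, rfl⟩

namespace IsCanonicalExtension

variable {A C : Type*} [DistribLattice A] [BoundedOrder A] [CompleteLattice C] {e : A → C}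

theorem monotone (he : IsCanonicalExtension e) : Monotone e := fun a b hab => by
  simpa [inf_eq_left.mpr hab] using (he.map_inf a b).le.trans inf_le_right

theorem map_finset_sup_le_sSup (he : IsCanonicalExtension e) {G : Finset A} {S : Set A}
    (hG : ↑G ⊆ S) : e (G.sup id) ≤ sSup (e '' S) := by
  rw [Finset.apply_sup_eq_sup_comp e he.map_sup he.map_bot]
  exact Finset.sup_le fun a ha => le_sSup ⟨a, hG ha, rfl⟩

theorem openElem_of_cmPrime (he : IsCanonicalExtension e) {m : C} (hm : CMPrime m) :
    OpenElem e m := by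
  obtain ⟨𝒮, h𝒮⟩ := he.dense_meetOfJoins m
  obtain ⟨_, ⟨S, hS, rfl⟩, hSm⟩ := hm.2 _ h𝒮.ge
  exact ⟨S, le_antisymm (h𝒮 ▸ sInf_le ⟨S, hS, rfl⟩) hSm⟩

theorem upDir_image_le (he : IsCanonicalExtension e) (u : C) : UpDir (e '' {a | e a ≤ u}) := by
  refine ⟨⟨e ⊥, ⊥, by simp [he.map_bot], rfl⟩, ?_⟩
  rintro _ ⟨a, ha, rfl⟩ _ ⟨b, hb, rfl⟩
  exact ⟨e (a ⊔ b), ⟨a ⊔ b, (he.map_sup a b).trans_le (sup_le ha hb), rfl⟩,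
    he.monotone le_sup_left, he.monotone le_sup_right⟩

theorem exists_mem_le_of_sInf_le (he : IsCanonicalExtension e) {T : Set A} (htop : ⊤ ∈ T)
    (hinf : ∀ a ∈ T, ∀ b ∈ T, a ⊓ b ∈ T) {o : C} (ho : OpenElem e o) (h : sInf (e '' T) ≤ o) :
    ∃ a ∈ T, e a ≤ o := by
  obtain ⟨S, rfl⟩ := ho
  obtain ⟨F, hF, G, hG, hFG⟩ := he.compact T S h
  exact ⟨F.inf id, Finset.inf_induction htop hinf hF,
    (he.monotone hFG).trans (he.map_finset_sup_le_sSup hG)⟩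

theorem map_le_of_openEsakia {D : Type*} [CompleteLattice D] (he : IsCanonicalExtension e)
    {g : C → D} (hgoE : OpenEsakia e g) {u : C} (hu : OpenElem e u) {n : D}
    (h : ∀ a, e a ≤ u → g (e a) ≤ n) : g u ≤ n := by
  have hopen : ∀ x ∈ e '' {a | e a ≤ u}, OpenElem e x := by
    rintro _ ⟨a, -, rfl⟩
    exact ⟨{a}, by simp⟩
  rw [← hu.sSup_image_setOf_le, hgoE _ (he.upDir_image_le u) hopen]
  refine sSup_le ?_
  rintro _ ⟨_, ⟨a, ha, rfl⟩, rfl⟩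
  exact h a ha

end IsCanonicalExtension

theorem exists_cmPrime_ge_map_le {A C D : Type*} [DistribLattice A] [BoundedOrder A]
    [CompleteLattice C] [CompleteLattice D] {e : A → C} (he : IsCanonicalExtension e)
    (hCm : MeetPerfect C) {g : C → D} (hg : Monotone g) (hgoE : OpenEsakia e g)
    (hmul : ∀ a b : A, g (e a) ⊓ g (e b) ≤ g (e (a ⊓ b))) {n : D} (hn : CMPrime n)
    (hgt : ¬ g ⊤ ≤ n) {o : C} (ho : OpenElem e o) (hgo : g o ≤ n) :
    ∃ m, CMPrime m ∧ o ≤ m ∧ g m ≤ n := by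
  set T : Set A := {a | ¬ g (e a) ≤ n}
  have htop : ⊤ ∈ T := by simpa [T, he.map_top] using hgt
  have hinf : ∀ a ∈ T, ∀ b ∈ T, a ⊓ b ∈ T := fun a ha b hb hab =>
    (hn.le_or_le_of_inf_le ((hmul a b).trans hab)).elim ha hb
  have hTo : ¬ sInf (e '' T) ≤ o := fun h => by
    obtain ⟨a, haT, hao⟩ := he.exists_mem_le_of_sInf_le htop hinf ho h
    exact haT ((hg hao).trans hgo)
  obtain ⟨m, hm, hom, hTm⟩ := hCm.exists_cmPrime_ge_not_le hTo
  refine ⟨m, hm, hom, he.map_le_of_openEsakia hgoE (he.openElem_of_cmPrime hm) fun a ham => ?_⟩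
  by_contra haT
  exact hTm ((sInf_le (Set.mem_image_of_mem e haT)).trans ham)

theorem stmt6_general {A C D : Type*} [DistribLattice A] [BoundedOrder A]
    [CompleteLattice C] [CompleteLattice D]
    (eA : A → C)
    (hceA : IsCanonicalExtension eA)
    (hCm : MeetPerfect C)
    (hDm : MeetPerfect D)
    (g : C → D) (hg : Monotone g)
    (hgoE : OpenEsakia eA g)
    (hmul : ∀ a b : A, g (eA a) ⊓ g (eA b) ≤ g (eA (a ⊓ b))) :
    ∀ o : C, OpenElem eA o → g o = g ⊤ ⊓ boxg g o := by
  intro o ho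
  refine le_antisymm (le_inf (hg le_top) (le_sInf ?_)) ?_
  · rintro _ ⟨m, ⟨-, hom⟩, rfl⟩
    exact hg hom
  rw [hDm (g o)]
  refine le_sInf fun n ⟨hn, hgo⟩ => ?_
  by_cases hgt : g ⊤ ≤ n
  · exact inf_le_left.trans hgt
  obtain ⟨m, hm, hom, hmn⟩ := exists_cmPrime_ge_map_le hceA hCm hg hgoE hmul hn hgt ho hgo
  exact inf_le_right.trans ((sInf_le ⟨m, ⟨hm, hom⟩, rfl⟩ : boxg g o ≤ g m).trans hmn)

/-- Proposition 4.9(2): under the standing hypotheses on `g`,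
`g o = g ⊤ ⊓ □_g o` for every open `o`. -/
theorem stmt6 {A B C D : Type*} [DistribLattice A] [BoundedOrder A]
    [DistribLattice B] [BoundedOrder B] [CompleteLattice C] [CompleteLattice D]
    (eA : A → C) (eB : B → D)
    (hceA : IsCanonicalExtension eA) (hceB : IsCanonicalExtension eB)
    (hCj : JoinPerfect C) (hCm : MeetPerfect C)
    (hDj : JoinPerfect D) (hDm : MeetPerfect D)
    (g : C → D) (hg : Monotone g)
    (hgcE : ClosedEsakia eA g) (hgoE : OpenEsakia eA g)
    (hop : ∀ a : A, OpenElem eB (g (eA a)))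
    (hmul : ∀ a b : A, g (eA a) ⊓ g (eA b) ≤ g (eA (a ⊓ b))) :
    ∀ o : C, OpenElem eA o → g o = g ⊤ ⊓ boxg g o :=
  stmt6_general eA hceA hCm hDm g hg hgoE hmul
end

section
/- Validity of the canonical pseudo-correspondent (order-theoretic form of Proposition 3.6): let (C, e) be a canonical extension of a bounded distributive lattice A with C join-perfect and meet-perfect, and let f : C → C be monotone, closed Esakia and open Esakia, with f(e a) closed in C for every a ∈ A and f(e (a ⊔ b)) ≤ f(e a) ⊔ f(e b) for all a, b ∈ A. Then for every completely meet-prime element m of C, if f(⊥) ≤ m then f(■_f(m)) ≤ m. -/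
/-!
Put `u := ⋁ {e a | f (e a) ≤ m}`. Since `f (e (a ⊔ b)) ≤ f (e a) ⊔ f (e b)` and `f ⊥ ≤ m`, this
is an up-directed join of open elements, so open Esakia gives `f u ≤ m`. On the other side, a
completely join-prime `j` is closed, and a closed `x` is the down-directed meet of the `e a`
above it; closed Esakia and complete meet-primality of `m` turn `f j ≤ m` into `f (e a) ≤ m` for
some `e a ≥ j`, whence `j ≤ u`. Thus `■_f m ≤ u` and `f (■_f m) ≤ f u ≤ m`.
-/

section

variable {A C : Type*} [CompleteLattice C] {e : A → C}

lemma closedElem_apply (a : A) : ClosedElem e (e a) :=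
  ⟨{a}, by simp⟩

lemma openElem_apply (a : A) : OpenElem e (e a) :=
  ⟨{a}, by simp⟩

lemma ClosedElem.sInf_image_setOf_le {x : C} (hx : ClosedElem e x) :
    sInf (e '' {a | x ≤ e a}) = x := by
  obtain ⟨S, rfl⟩ := hx
  refine le_antisymm (sInf_le_sInf (Set.image_mono fun a ha => ?_)) (le_sInf ?_)
  · exact sInf_le (Set.mem_image_of_mem e ha)
  · rintro _ ⟨a, ha, rfl⟩
    exact ha

end

namespace IsCanonicalExtension

variable {A C : Type*} [DistribLattice A] [BoundedOrder A] [CompleteLattice C] {e : A → C}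

lemma closedElem_of_cjPrime (hce : IsCanonicalExtension e) {j : C} (hj : CJPrime j) :
    ClosedElem e j := by
  obtain ⟨𝒮, h𝒮⟩ := hce.dense_joinOfMeets j
  obtain ⟨_, ⟨S, hS, rfl⟩, hjS⟩ := hj.2 _ h𝒮.le
  exact ⟨S, hjS.antisymm (h𝒮 ▸ le_sSup ⟨S, hS, rfl⟩)⟩

lemma downDir_image_setOf_le (hce : IsCanonicalExtension e) (x : C) :
    DownDir (e '' {a | x ≤ e a}) := by
  refine ⟨⟨e ⊤, ⊤, by simp [hce.map_top], rfl⟩, ?_⟩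
  rintro _ ⟨a, ha, rfl⟩ _ ⟨b, hb, rfl⟩
  refine ⟨e (a ⊓ b), ⟨a ⊓ b, ?_, rfl⟩, ?_, ?_⟩ <;>
    simp only [Set.mem_ofPred_eq, hce.map_inf] at ha hb ⊢
  exacts [le_inf ha hb, inf_le_left, inf_le_right]

lemma exists_le_map_le_of_closedEsakia {D : Type*} [CompleteLattice D]
    (hce : IsCanonicalExtension e) {f : C → D} (hf : ClosedEsakia e f) {m : D}
    (hm : CMPrime m) {x : C} (hx : ClosedElem e x) (hfx : f x ≤ m) :
    ∃ a, x ≤ e a ∧ f (e a) ≤ m := by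
  have hmeet : f x = sInf (f '' (e '' {a | x ≤ e a})) := by
    conv_lhs => rw [← hx.sInf_image_setOf_le]
    exact hf _ (hce.downDir_image_setOf_le x) (by rintro _ ⟨a, -, rfl⟩; exact closedElem_apply a)
  obtain ⟨_, ⟨_, ⟨a, ha, rfl⟩, rfl⟩, hfa⟩ := hm.2 _ (hmeet ▸ hfx)
  exact ⟨a, ha, hfa⟩

lemma bsq_le_sSup_image_setOf_map_le {D : Type*} [CompleteLattice D]
    (hce : IsCanonicalExtension e) {f : C → D} (hf : ClosedEsakia e f) {m : D}
    (hm : CMPrime m) :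
    bsq f m ≤ sSup (e '' {a | f (e a) ≤ m}) := by
  refine sSup_le fun j ⟨hj, hfj⟩ => ?_
  obtain ⟨a, hja, hfa⟩ :=
    hce.exists_le_map_le_of_closedEsakia hf hm (hce.closedElem_of_cjPrime hj) hfj
  exact hja.trans (le_sSup (Set.mem_image_of_mem e hfa))

lemma upDir_image_setOf_map_le {D : Type*} [CompleteLattice D]
    (hce : IsCanonicalExtension e) {f : C → D}
    (hadd : ∀ a b, f (e (a ⊔ b)) ≤ f (e a) ⊔ f (e b)) {v : D} (hbot : f ⊥ ≤ v) :
    UpDir (e '' {a | f (e a) ≤ v}) := by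
  refine ⟨⟨e ⊥, ⊥, by simpa [hce.map_bot] using hbot, rfl⟩, ?_⟩
  rintro _ ⟨a, ha, rfl⟩ _ ⟨b, hb, rfl⟩
  refine ⟨e (a ⊔ b), ⟨a ⊔ b, (hadd a b).trans (sup_le ha hb), rfl⟩, ?_, ?_⟩ <;>
    simp only [hce.map_sup, le_sup_left, le_sup_right]

lemma map_sSup_image_setOf_map_le {D : Type*} [CompleteLattice D]
    (hce : IsCanonicalExtension e) {f : C → D} (hf : OpenEsakia e f)
    (hadd : ∀ a b, f (e (a ⊔ b)) ≤ f (e a) ⊔ f (e b)) {v : D} (hbot : f ⊥ ≤ v) :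
    f (sSup (e '' {a | f (e a) ≤ v})) ≤ v := by
  rw [hf _ (hce.upDir_image_setOf_map_le hadd hbot)
    (by rintro _ ⟨a, -, rfl⟩; exact openElem_apply a)]
  refine sSup_le ?_
  rintro _ ⟨_, ⟨a, ha, rfl⟩, rfl⟩
  exact ha

end IsCanonicalExtension

theorem stmt15_general {A C : Type*} [DistribLattice A] [BoundedOrder A] [CompleteLattice C]
    (e : A → C) (hce : IsCanonicalExtension e)
    (f : C → C) (hf : Monotone f)
    (hfcE : ClosedEsakia e f) (hfoE : OpenEsakia e f)
    (hadd : ∀ a b : A, f (e (a ⊔ b)) ≤ f (e a) ⊔ f (e b)) :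
    ∀ m : C, CMPrime m → f ⊥ ≤ m → f (bsq f m) ≤ m := fun _ hm hbot =>
  (hf (hce.bsq_le_sSup_image_setOf_map_le hfcE hm)).trans
    (hce.map_sSup_image_setOf_map_le hfoE hadd hbot)

/-- Order-theoretic form of Proposition 3.6: the canonical pseudo-correspondent
holds on the canonical extension: for every completely meet-prime `m`,
if `f ⊥ ≤ m` then `f (■_f m) ≤ m`. -/
theorem stmt15 {A C : Type*} [DistribLattice A] [BoundedOrder A] [CompleteLattice C]
    (e : A → C) (hce : IsCanonicalExtension e)
    (hCj : JoinPerfect C) (hCm : MeetPerfect C)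
    (f : C → C) (hf : Monotone f)
    (hfcE : ClosedEsakia e f) (hfoE : OpenEsakia e f)
    (hcl : ∀ a : A, ClosedElem e (f (e a)))
    (hadd : ∀ a b : A, f (e (a ⊔ b)) ≤ f (e a) ⊔ f (e b)) :
    ∀ m : C, CMPrime m → f ⊥ ≤ m → f (bsq f m) ≤ m :=
  stmt15_general e hce f hf hfcE hfoE hadd
end
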